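/- Fix n ≥ 1 and strictly interlacing real numbers z_i^{(j)} for j = 1,…,n, i = 1,…,j (i.e. z_{1}^{(j+1)} > z_1^{(j)} > z_2^{(j+1)} > z_2^{(j)} > … > z_j^{(j)} > z_{j+1}^{(j+1)} for each j). For each N, set y_i^{(j)}(N) = ⌊(z_i^{(j)}√N + N)/2⌋ and define P_N = [∏_{i=0}^{n−1}(N−i)! / ∏_{i=1}^{n} y_i^{(n)}(N)! (N − y_i^{(n)}(N))!] · Δ(y^{(n)}(N)) · 2^{−N −(N−n)(n−1) − α(y^{(1)}(N),…,y^{(n−1)}(N))}, where α(y^{(1)},…,y^{(n−1)}) = ∑_{k=1}^{n−1} #{i : y_i^{(k)} = y_i^{(k+1)} or y_i^{(k)} = y_{i+1}^{(k+1)}}. Then lim_{N→∞} (N/4)^{n(n+1)/4} · P_N = (2π)^{−n/2} · ∏_{1≤i<j≤n}(z_i^{(n)} − z_j^{(n)}) · exp(−(1/2)∑_{i=1}^{n}(z_i^{(n)})^2), which is the joint density of the GUE* minor process (eigenvalues of the top-left j×j minors, j = 1,…,n, of a complex Hermitian matrix with measure proportional to e^{−Tr X²/2}). -/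

import Mathlib

/-!
For large `N` the strict interlacing of the `z`'s passes to the lattice points, so `α = 0`. The
rescaled density then factorizes exactly as
`2^{-n} · ∏ᵢ C(N, yᵢ) √N / 2^N · Δ((2y - N)/√N) · ∏_{i<n} N^i (N-i)!/N!`,
because `Δ` is translation invariant and homogeneous of degree `n(n-1)/2`. The last product tends
to `1`, the Vandermonde factor to `Δ(z)`, and each binomial factor to `√(2/π) e^{-zᵢ²/2}` by the
de Moivre–Laplace local limit theorem, which follows from Stirling's formula and
`(1+a) log(1+a) + (1-a) log(1-a) = a² + O(a⁴)`.
-/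

open Finset

/-- The rescaled lattice points `y_i^{(j)}(N) = ⌊(z_i^{(j)} √N + N)/2⌋`. -/
noncomputable def aztecY (n : ℕ) (z : (j : Fin n) → Fin (j.1 + 1) → ℝ) (N : ℕ)
    (j : Fin n) (i : Fin (j.1 + 1)) : ℤ :=
  Int.floor ((z j i * Real.sqrt N + N) / 2)

/-- The adjacency count
`α(y^{(1)},…,y^{(n-1)}) = ∑_{k=1}^{n-1} #{i : y_i^{(k)} = y_i^{(k+1)} or y_i^{(k)} = y_{i+1}^{(k+1)}}`
for the lattice points `aztecY`. -/
noncomputable def aztecAlphaY (n : ℕ) (z : (j : Fin n) → Fin (j.1 + 1) → ℝ)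
    (N : ℕ) : ℕ :=
  ∑ j : Fin n, if h : j.1 + 1 < n then
    (univ.filter (fun i : Fin (j.1 + 1) =>
      aztecY n z N j i = aztecY n z N ⟨j.1 + 1, h⟩ i.castSucc ∨
      aztecY n z N j i = aztecY n z N ⟨j.1 + 1, h⟩ i.succ)).card
  else 0

open Filter Topology Real Asymptotics

lemma abs_log_one_sub_add_le {x : ℝ} (hx : |x| ≤ 1/2) :
    |log (1 - x) + (x + x^2/2 + x^3/3)| ≤ 2 * x^4 := by
  have h := Real.abs_log_sub_add_sum_range_le (hx.trans_lt (by norm_num)) 3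
  simp only [Finset.sum_range_succ, Finset.sum_range_zero] at h
  norm_num at h
  calc _ = |x + x^2/2 + x^3/3 + log (1 - x)| := by ring_nf
    _ ≤ |x|^4 / (1 - |x|) := h
    _ ≤ 2 * x^4 := by
      rw [div_le_iff₀ (by linarith), pow_abs, abs_of_nonneg (by positivity)]
      nlinarith [pow_nonneg (abs_nonneg x) 4, sq_nonneg (x^2)]

-- `(1+a) log(1+a) + (1-a) log(1-a)` is twice the relative entropy of `Bernoulli((1+a)/2)`
-- with respect to `Bernoulli(1/2)`.
lemma abs_entropy_sub_sq_le {a : ℝ} (ha : |a| ≤ 1/2) :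
    |(1 + a) * log (1 + a) + (1 - a) * log (1 - a) - a^2| ≤ 7 * a^4 := by
  have hplus := abs_log_one_sub_add_le (x := -a) (by rwa [abs_neg])
  have hminus := abs_log_one_sub_add_le ha
  rw [sub_neg_eq_add] at hplus
  rw [abs_le] at ha hplus hminus ⊢
  constructor <;>
  nlinarith [mul_le_mul_of_nonneg_left hplus.1 (by linarith : (0:ℝ) ≤ 1 + a),
    mul_le_mul_of_nonneg_left hplus.2 (by linarith : (0:ℝ) ≤ 1 + a),
    mul_le_mul_of_nonneg_left hminus.1 (by linarith : (0:ℝ) ≤ 1 - a),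
    mul_le_mul_of_nonneg_left hminus.2 (by linarith : (0:ℝ) ≤ 1 - a),
    pow_nonneg (sq_nonneg a) 2]

lemma tendsto_sqrt_natCast_atTop : Tendsto (fun N : ℕ => √(N : ℝ)) atTop atTop :=
  tendsto_sqrt_atTop.comp tendsto_natCast_atTop_atTop

lemma sqrt_natCast_mul_div_natCast (u : ℝ) (N : ℕ) : √(N : ℝ) * (u / N) = u / √N := by
  rcases Nat.eq_zero_or_pos N with rfl | hN
  · simp
  · have hs : √(N : ℝ) ≠ 0 := by positivity
    have hsq := Real.mul_self_sqrt (Nat.cast_nonneg (α := ℝ) N)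
    field_simp
    linear_combination u * hsq

lemma tendsto_div_natCast_of_tendsto_div_sqrt {u : ℕ → ℝ} {x : ℝ}
    (h : Tendsto (fun N => u N / √N) atTop (𝓝 x)) :
    Tendsto (fun N => u N / N) atTop (𝓝 0) := by
  have h0 := h.mul tendsto_sqrt_natCast_atTop.inv_tendsto_atTop
  rw [mul_zero] at h0
  refine h0.congr fun N => ?_
  rw [Pi.inv_apply, ← div_eq_mul_inv, div_div, Real.mul_self_sqrt (Nat.cast_nonneg N)]

lemma eventually_div_four_lt {u : ℕ → ℝ} {x : ℝ}
    (h : Tendsto (fun N : ℕ => (2 * u N - N) / √N) atTop (𝓝 x)) :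
    ∀ᶠ N : ℕ in atTop, (N : ℝ) / 4 < u N ∧ (N : ℝ) / 4 < N - u N := by
  filter_upwards [(tendsto_div_natCast_of_tendsto_div_sqrt h).abs.eventually_lt_const
    (by norm_num : |(0 : ℝ)| < 1 / 2), eventually_gt_atTop 0] with N hlt hN
  rw [abs_div, Nat.abs_cast, div_lt_iff₀ (by exact_mod_cast hN), abs_lt] at hlt
  constructor <;> linarith [hlt.1, hlt.2]

lemma tendsto_natCast_mul_entropy {u : ℕ → ℝ} {x : ℝ}
    (h : Tendsto (fun N => u N / √N) atTop (𝓝 x)) :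
    Tendsto (fun N : ℕ => (N : ℝ) / 2 *
      ((1 + u N / N) * log (1 + u N / N) + (1 - u N / N) * log (1 - u N / N)))
      atTop (𝓝 (x^2 / 2)) := by
  set a : ℕ → ℝ := fun N => u N / N
  have ha : Tendsto a atTop (𝓝 0) := tendsto_div_natCast_of_tendsto_div_sqrt h
  have hxa : Tendsto (fun N : ℕ => √(N : ℝ) * a N) atTop (𝓝 x) :=
    h.congr fun N => (sqrt_natCast_mul_div_natCast (u N) N).symm
  have hsq : ∀ N : ℕ, (√(N : ℝ) * a N)^2 = N * a N ^ 2 := fun N => by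
    rw [mul_pow, Real.sq_sqrt (Nat.cast_nonneg _)]
  have herr : Tendsto (fun N : ℕ => (N : ℝ) / 2 *
      ((1 + a N) * log (1 + a N) + (1 - a N) * log (1 - a N) - a N ^ 2)) atTop (𝓝 0) := by
    have hbound : Tendsto (fun N : ℕ => 7 / 2 * ((√(N : ℝ) * a N)^2 * a N ^ 2)) atTop (𝓝 0) := by
      simpa using ((hxa.pow 2).mul (ha.pow 2)).const_mul (7 / 2)
    refine squeeze_zero_norm' ?_ hbound
    filter_upwards [(ha.abs.eventually_le_const (by norm_num : |(0:ℝ)| < 1/2))] with N haN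
    rw [norm_mul, Real.norm_eq_abs, Real.norm_eq_abs, abs_of_nonneg (by positivity), hsq]
    calc (N : ℝ) / 2 * |_| ≤ N / 2 * (7 * a N ^ 4) := by
          gcongr; exact abs_entropy_sub_sq_le haN
      _ = 7 / 2 * (N * a N ^ 2 * a N ^ 2) := by ring
  have hmain := ((hxa.pow 2).div_const 2).add herr
  rw [add_zero] at hmain
  refine hmain.congr fun N => ?_
  rw [hsq]
  ring

noncomputable def stirlingApprox (n : ℕ) : ℝ := √(2 * n * π) * (n / exp 1) ^ n

lemma div_exp_one_pow_eq {m : ℕ} (hm : 0 < m) :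
    ((m : ℝ) / exp 1) ^ m = exp (m * log m - m) := by
  rw [← Real.exp_log (by positivity : (0:ℝ) < m / exp 1), ← Real.exp_nat_mul,
    Real.log_div (by positivity) (by positivity), Real.log_exp]
  ring_nf

lemma stirlingApprox_ratio_eq {k N : ℕ} (hk : 0 < k) (hkN : k < N) :
    stirlingApprox N / (stirlingApprox k * stirlingApprox (N - k)) * √(N : ℝ) / 2 ^ N =
      √(2 / (π * (1 - ((2 * k - N) / N)^2))) *
      exp (-((N : ℝ) / 2 * ((1 + (2 * k - N) / N) * log (1 + (2 * k - N) / N) +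
        (1 - (2 * k - N) / N) * log (1 - (2 * k - N) / N)))) := by
  obtain ⟨q, rfl⟩ : ∃ q, N = k + q := ⟨N - k, by omega⟩
  have hq : 0 < q := by omega
  rw [Nat.add_sub_cancel_left]
  simp only [stirlingApprox, div_exp_one_pow_eq hk, div_exp_one_pow_eq hq,
    div_exp_one_pow_eq (by omega : 0 < k + q)]
  set P : ℝ := (k : ℝ)
  set Q : ℝ := (q : ℝ)
  have hP : 0 < P := by positivity
  have hQ : 0 < Q := by positivity
  push_cast
  have h1 : 1 + (2 * P - (P + Q)) / (P + Q) = 2 * P / (P + Q) := by field_simp; ring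
  have h2 : 1 - (2 * P - (P + Q)) / (P + Q) = 2 * Q / (P + Q) := by field_simp; ring
  have h3 : 1 - ((2 * P - (P + Q)) / (P + Q))^2 = 4 * P * Q / (P + Q)^2 := by field_simp; ring
  rw [h1, h2, h3]
  have hsqrt : √(2 * (P + Q) * π) * √(P + Q) / (√(2 * P * π) * √(2 * Q * π)) =
      √(2 / (π * (4 * P * Q / (P + Q)^2))) := by
    rw [← Real.sqrt_mul (by positivity), ← Real.sqrt_mul (by positivity),
      ← Real.sqrt_div (by positivity)]
    congr 1
    field_simp
    ring
  have hexp : exp ((P + Q) * log (P + Q) - (P + Q)) /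
      (exp (P * log P - P) * exp (Q * log Q - Q)) / 2 ^ (k + q) =
      exp (-((P + Q) / 2 * (2 * P / (P + Q) * log (2 * P / (P + Q)) +
        2 * Q / (P + Q) * log (2 * Q / (P + Q))))) := by
    rw [show (2:ℝ) ^ (k + q) = exp ((P + Q) * log 2) by
      rw [show P + Q = ((k + q : ℕ) : ℝ) by push_cast; rfl, Real.exp_nat_mul,
        Real.exp_log two_pos]]
    rw [← Real.exp_add, ← Real.exp_sub, ← Real.exp_sub]
    congr 1
    rw [Real.log_div (by positivity) (by positivity), Real.log_div (by positivity) (by positivity),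
      Real.log_mul two_ne_zero hP.ne', Real.log_mul two_ne_zero hQ.ne']
    field_simp
    ring
  rw [← hsqrt, ← hexp]
  ring

lemma natCast_choose_isEquivalent {k : ℕ → ℕ} (hk : Tendsto k atTop atTop)
    (hNk : Tendsto (fun N => N - k N) atTop atTop) (hle : ∀ᶠ N in atTop, k N ≤ N) :
    (fun N : ℕ => (N.choose (k N) : ℝ)) ~[atTop]
      fun N => stirlingApprox N / (stirlingApprox (k N) * stirlingApprox (N - k N)) := by
  have hS : (fun n : ℕ => (n.factorial : ℝ)) ~[atTop] stirlingApprox :=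
    Stirling.factorial_isEquivalent_stirling
  refine (hS.div ((hS.comp_tendsto hk).mul (hS.comp_tendsto hNk))).congr_left ?_
  filter_upwards [hle] with N h
  simp [Nat.cast_choose ℝ h]

theorem tendsto_choose_mul_sqrt_div_two_pow {k : ℕ → ℕ} {x : ℝ}
    (hk : Tendsto (fun N : ℕ => (2 * (k N : ℝ) - N) / √N) atTop (𝓝 x)) :
    Tendsto (fun N : ℕ => (N.choose (k N) : ℝ) * √N / 2 ^ N) atTop
      (𝓝 (√(2 / π) * exp (-x^2 / 2))) := by
  have hbal := eventually_div_four_lt hk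
  have hkN : ∀ᶠ N : ℕ in atTop, 0 < k N ∧ k N < N := by
    filter_upwards [hbal] with N ⟨h1, h2⟩
    have hN : (0 : ℝ) ≤ N := Nat.cast_nonneg N
    exact ⟨by exact_mod_cast (by linarith : (0 : ℝ) < k N),
      by exact_mod_cast (by linarith : (k N : ℝ) < N)⟩
  have hquarter : Tendsto (fun N : ℕ => (N : ℝ) / 4) atTop atTop :=
    tendsto_natCast_atTop_atTop.atTop_div_const (by norm_num)
  have hk_top : Tendsto k atTop atTop := by
    refine tendsto_natCast_atTop_iff.mp (tendsto_atTop_mono' atTop ?_ hquarter)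
    filter_upwards [hbal] with N h using h.1.le
  have hNk_top : Tendsto (fun N => N - k N) atTop atTop := by
    refine tendsto_natCast_atTop_iff.mp (tendsto_atTop_mono' atTop ?_ hquarter)
    filter_upwards [hbal, hkN] with N h hlt
    rw [Nat.cast_sub hlt.2.le]
    exact h.2.le
  have hequiv := ((natCast_choose_isEquivalent hk_top hNk_top
    (hkN.mono fun N h => h.2.le)).mul (IsEquivalent.refl (u := fun N : ℕ => √(N : ℝ)))).div
      (IsEquivalent.refl (u := fun N : ℕ => (2 : ℝ) ^ N))
  refine hequiv.tendsto_nhds_iff.mpr ?_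
  have hsqrt : Tendsto (fun N : ℕ => √(2 / (π * (1 - ((2 * k N - N) / N)^2)))) atTop
      (𝓝 (√(2 / π))) := by
    have hden := (((tendsto_div_natCast_of_tendsto_div_sqrt hk).pow 2).const_sub 1).const_mul π
    simpa using ((tendsto_const_nhds (x := (2 : ℝ))).div hden (by simp [pi_ne_zero])).sqrt
  have hexp := (Real.continuous_exp.tendsto _).comp (tendsto_natCast_mul_entropy hk).neg
  rw [neg_div]
  refine (hsqrt.mul hexp).congr' ?_
  filter_upwards [hkN] with N h
  exact (stirlingApprox_ratio_eq h.1 h.2).symm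

lemma tendsto_descFactorial_div_pow (i : ℕ) :
    Tendsto (fun N : ℕ => (N.descFactorial i : ℝ) / (N : ℝ) ^ i) atTop (𝓝 1) := by
  have hlower : Tendsto (fun N : ℕ => (1 + (1 - (i : ℝ)) * (N : ℝ)⁻¹) ^ i) atTop (𝓝 1) := by
    simpa using ((tendsto_inv_atTop_zero.comp tendsto_natCast_atTop_atTop).const_mul
      (1 - (i : ℝ))).const_add 1 |>.pow i
  refine tendsto_of_tendsto_of_tendsto_of_le_of_le' hlower tendsto_const_nhds ?_ ?_
  · filter_upwards [eventually_ge_atTop (max i 1)] with N hN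
    have hN0 : (0 : ℝ) < N := by exact_mod_cast (le_max_right i 1).trans hN
    rw [le_div_iff₀ (by positivity), ← mul_pow]
    calc ((1 + (1 - (i : ℝ)) * (N : ℝ)⁻¹) * N) ^ i = (((N + 1 - i : ℕ) : ℝ)) ^ i := by
          rw [Nat.cast_sub (by omega)]
          field_simp
          push_cast
          ring
      _ ≤ N.descFactorial i := by exact_mod_cast N.pow_sub_le_descFactorial i
  · filter_upwards [eventually_gt_atTop 0] with N hN
    rw [div_le_one (by positivity)]
    exact_mod_cast N.descFactorial_le_pow i

lemma tendsto_pow_mul_factorial_sub_div_factorial (i : ℕ) :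
    Tendsto (fun N : ℕ => (N : ℝ) ^ i * ((N - i).factorial : ℝ) / (N.factorial : ℝ))
      atTop (𝓝 1) := by
  have h := (tendsto_descFactorial_div_pow i).inv₀ one_ne_zero
  rw [inv_one] at h
  refine h.congr' ?_
  filter_upwards [eventually_ge_atTop i] with N hN
  rw [← Nat.factorial_mul_descFactorial hN, Nat.cast_mul, inv_div]
  field_simp

section Vandermonde

variable {R : Type*} {n : ℕ}

lemma prod_prod_ite_lt_const [CommMonoid R] (c : R) :
    ∏ i : Fin n, ∏ j : Fin n, (if i < j then c else 1) = c ^ ∑ i ∈ range n, i := by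
  simp only [← prod_filter, prod_const, prod_pow_eq_pow_sum]
  congr 1
  have hcard : ∀ i : Fin n, #{j | i < j} = n - 1 - i := fun i => by
    rw [← Fin.card_Ioi]; congr 1; ext j; simp
  simp only [hcard]
  rw [Fin.sum_univ_eq_sum_range (fun i => n - 1 - i), sum_range_reflect (fun i => i) n]

variable [CommRing R]

def vandermondeProd (v : Fin n → R) : R := ∏ i, ∏ j, if i < j then v i - v j else 1

lemma vandermondeProd_of_affine {u v : Fin n → R} {c d : R} (h : ∀ i, u i = c * v i + d) :
    vandermondeProd u = c ^ (∑ i ∈ range n, i) * vandermondeProd v := by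
  rw [vandermondeProd, vandermondeProd, ← prod_prod_ite_lt_const, ← prod_mul_distrib]
  refine prod_congr rfl fun i _ => ?_
  rw [← prod_mul_distrib]
  refine prod_congr rfl fun j _ => ?_
  split_ifs
  · rw [h, h]; ring
  · rw [one_mul]

lemma continuous_vandermondeProd [TopologicalSpace R] [IsTopologicalRing R] :
    Continuous (vandermondeProd : (Fin n → R) → R) := by
  refine continuous_finsetProd _ fun i _ => continuous_finsetProd _ fun j _ => ?_
  split_ifs <;> fun_prop

end Vandermonde

lemma natCast_div_four_rpow_eq (N T m : ℕ) (hT : T * 2 = (m + 1) * m) :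
    ((N : ℝ) / 4) ^ ((((m + 1) * (m + 1 + 1) : ℕ) : ℝ) / 4) = (√(N : ℝ) / 2) ^ (T + (m + 1)) := by
  rw [show (N : ℝ) / 4 = (√(N : ℝ) / 2) ^ 2 by
      rw [div_pow, Real.sq_sqrt (Nat.cast_nonneg _)]; norm_num,
    ← Real.rpow_natCast _ 2, ← Real.rpow_mul (by positivity), ← Real.rpow_natCast]
  congr 1
  have hT' : (T : ℝ) * 2 = (m + 1) * m := by exact_mod_cast hT
  push_cast
  linear_combination -hT' / 2

lemma prod_factorial_sub_eq {N : ℕ} (hN : N ≠ 0) (n : ℕ) :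
    ∏ i ∈ range n, ((N - i).factorial : ℝ) =
      (∏ i ∈ range n, (N : ℝ) ^ i * ((N - i).factorial : ℝ) / (N.factorial : ℝ)) *
        (N.factorial : ℝ) ^ n / (N : ℝ) ^ ∑ i ∈ range n, i := by
  have hN0 : (N : ℝ) ≠ 0 := by exact_mod_cast hN
  have hterm : ∀ i ∈ range n, ((N - i).factorial : ℝ) =
      (N : ℝ) ^ i * ((N - i).factorial : ℝ) / (N.factorial : ℝ) * ((N.factorial : ℝ) / N ^ i) :=
    fun i _ => by field_simp
  rw [prod_congr rfl hterm, prod_mul_distrib, prod_div_distrib (fun _ => (N.factorial : ℝ)),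
    prod_const, card_range, prod_pow_eq_pow_sum, mul_div_assoc]

lemma prod_factorial_mul_factorial_eq {ι : Type*} [Fintype ι] {N : ℕ} {k : ι → ℕ}
    (hk : ∀ i, k i ≤ N) :
    ∏ i, (((k i).factorial * (N - k i).factorial : ℕ) : ℝ) =
      (N.factorial : ℝ) ^ Fintype.card ι / ∏ i, (N.choose (k i) : ℝ) := by
  have hterm : ∀ i ∈ univ, (((k i).factorial * (N - k i).factorial : ℕ) : ℝ) =
      (N.factorial : ℝ) / (N.choose (k i) : ℝ) := fun i _ => by
    rw [Nat.cast_choose ℝ (hk i), div_div_cancel₀ (by positivity), Nat.cast_mul]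
  rw [prod_congr rfl hterm, prod_div_distrib, prod_const, card_univ]

lemma scaled_density_eq (m N : ℕ) (hN : m + 1 ≤ N) (k : Fin (m + 1) → ℕ) (hk : ∀ i, k i ≤ N) :
    ((N : ℝ) / 4) ^ ((((m + 1) * (m + 1 + 1) : ℕ) : ℝ) / 4) *
      ((∏ i ∈ range (m + 1), ((N - i).factorial : ℝ)) /
        ∏ i, (((k i).factorial * (N - k i).factorial : ℕ) : ℝ)) *
      vandermondeProd (fun i => (k i : ℝ)) * ((2 : ℝ) ^ (N + (N - (m + 1)) * m))⁻¹ =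
    (∏ i, (N.choose (k i) : ℝ) * √(N : ℝ) / 2 ^ N) *
      vandermondeProd (fun i => (2 * (k i : ℝ) - N) / √N) *
      (∏ i ∈ range (m + 1), (N : ℝ) ^ i * ((N - i).factorial : ℝ) / (N.factorial : ℝ)) /
      2 ^ (m + 1) := by
  set T := ∑ i ∈ range (m + 1), i
  have hT : T * 2 = (m + 1) * m := sum_range_id_mul_two (m + 1)
  have hs : 0 < √(N : ℝ) := Real.sqrt_pos.mpr (by exact_mod_cast (by omega : 0 < N))
  have hvdm : vandermondeProd (fun i => (k i : ℝ)) =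
      (√(N : ℝ) / 2) ^ T * vandermondeProd (fun i => (2 * (k i : ℝ) - N) / √N) :=
    vandermondeProd_of_affine (d := (N : ℝ) / 2) fun i => by field_simp; ring
  have htwo : (2 : ℝ) ^ (N + (N - (m + 1)) * m) = (2 ^ N) ^ (m + 1) / 2 ^ (T * 2) := by
    rw [eq_div_iff (by positivity), ← pow_mul, ← pow_add]
    congr 1
    zify [hN] at hT ⊢
    linear_combination hT
  have hNT : (N : ℝ) ^ T = √(N : ℝ) ^ (T * 2) := by
    rw [pow_mul', Real.sq_sqrt (Nat.cast_nonneg _)]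
  have hlocal : ∏ i, (N.choose (k i) : ℝ) * √(N : ℝ) / 2 ^ N =
      (∏ i, (N.choose (k i) : ℝ)) * √(N : ℝ) ^ (m + 1) / (2 ^ N) ^ (m + 1) := by
    rw [prod_div_distrib, prod_mul_distrib, prod_const, prod_const, card_univ, Fintype.card_fin]
  rw [natCast_div_four_rpow_eq N T m hT, prod_factorial_sub_eq (by omega) (m + 1),
    prod_factorial_mul_factorial_eq hk, Fintype.card_fin, hvdm, htwo, hNT, hlocal]
  generalize vandermondeProd (fun i => (2 * (k i : ℝ) - N) / √N) = V
  generalize ∏ i ∈ range (m + 1), (N : ℝ) ^ i * ((N - i).factorial : ℝ) / (N.factorial : ℝ) = R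
  generalize hC : ∏ i, (N.choose (k i) : ℝ) = C
  have hC0 : C ≠ 0 :=
    hC ▸ prod_ne_zero_iff.mpr fun i _ => by exact_mod_cast (Nat.choose_pos (hk i)).ne'
  simp only [div_pow]
  field_simp
  ring

lemma sqrt_two_div_pi_pow_div_two_pow (n : ℕ) :
    √(2 / π) ^ n / 2 ^ n = (2 * π) ^ (-(n : ℝ) / 2) := by
  have hhalf : √(2 / π) / 2 = (2 * π) ^ (-(1 / 2) : ℝ) := by
    rw [Real.rpow_neg (by positivity), ← Real.sqrt_eq_rpow, Real.sqrt_div zero_le_two,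
      Real.sqrt_mul zero_le_two]
    have h2 := Real.mul_self_sqrt (zero_le_two (α := ℝ))
    have hs2 : √(2 : ℝ) ≠ 0 := by positivity
    have hsπ : √π ≠ 0 := by positivity
    field_simp
    linear_combination h2
  rw [← div_pow, hhalf, ← Real.rpow_natCast, ← Real.rpow_mul (by positivity)]
  ring_nf

theorem tendsto_scaled_density (m : ℕ) (y : ℕ → Fin (m + 1) → ℤ) (w : Fin (m + 1) → ℝ)
    (hy : ∀ i, Tendsto (fun N : ℕ => (2 * (y N i : ℝ) - N) / √N) atTop (𝓝 (w i))) :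
    Tendsto (fun N : ℕ =>
      ((N : ℝ) / 4) ^ ((((m + 1) * (m + 1 + 1) : ℕ) : ℝ) / 4) *
      ((∏ i ∈ range (m + 1), ((N - i).factorial : ℝ)) /
        ∏ i, (((y N i).toNat.factorial * ((N : ℤ) - y N i).toNat.factorial : ℕ) : ℝ)) *
      vandermondeProd (fun i => (y N i : ℝ)) * ((2 : ℝ) ^ (N + (N - (m + 1)) * m))⁻¹)
      atTop (𝓝 ((2 * π) ^ (-((m + 1 : ℕ) : ℝ) / 2) * vandermondeProd w *
        exp (-(1 / 2) * ∑ i, w i ^ 2))) := by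
  have hrange : ∀ᶠ N : ℕ in atTop, ∀ i, 0 ≤ y N i ∧ y N i ≤ N := by
    refine eventually_all.mpr fun i => ?_
    filter_upwards [eventually_div_four_lt (hy i)] with N ⟨h1, h2⟩
    have hN : (0 : ℝ) ≤ N := Nat.cast_nonneg N
    exact ⟨by exact_mod_cast (by linarith : (0 : ℝ) ≤ y N i),
      by exact_mod_cast (by linarith : (y N i : ℝ) ≤ N)⟩
  have hcast : ∀ᶠ N : ℕ in atTop, ∀ i, (y N i : ℝ) = ((y N i).toNat : ℝ) := by
    filter_upwards [hrange] with N h i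
    exact_mod_cast (Int.toNat_of_nonneg (h i).1).symm
  have hk : ∀ i, Tendsto (fun N : ℕ => (2 * ((y N i).toNat : ℝ) - N) / √N) atTop (𝓝 (w i)) :=
    fun i => (hy i).congr' <| by filter_upwards [hcast] with N h; rw [h i]
  have hlim := (((tendsto_finsetProd univ fun i _ => tendsto_choose_mul_sqrt_div_two_pow (hk i)).mul
    ((continuous_vandermondeProd.tendsto w).comp (tendsto_pi_nhds.mpr hk))).mul
    (tendsto_finsetProd (range (m + 1)) fun i _ =>
      tendsto_pow_mul_factorial_sub_div_factorial i)).div_const (2 ^ (m + 1))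
  have hvalue : ((∏ i, √(2 / π) * exp (-w i ^ 2 / 2)) * vandermondeProd w *
      ∏ _i ∈ range (m + 1), (1 : ℝ)) / 2 ^ (m + 1) =
      (2 * π) ^ (-((m + 1 : ℕ) : ℝ) / 2) * vandermondeProd w * exp (-(1 / 2) * ∑ i, w i ^ 2) := by
    rw [prod_mul_distrib, ← Real.exp_sum, prod_const, card_univ, Fintype.card_fin, prod_const_one,
      ← sqrt_two_div_pi_pow_div_two_pow, mul_sum]
    have hsum : ∑ i, -w i ^ 2 / 2 = ∑ i, -(1 / 2) * w i ^ 2 := sum_congr rfl fun i _ => by ring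
    rw [hsum]
    ring
  rw [hvalue] at hlim
  refine hlim.congr' ?_
  filter_upwards [hrange, hcast, eventually_ge_atTop (m + 1)] with N hr hc hN
  have hsub : ∀ i, ((N : ℤ) - y N i).toNat = N - (y N i).toNat := fun i => by have := hr i; omega
  rw [show (fun i => (y N i : ℝ)) = fun i => ((y N i).toNat : ℝ) from funext hc]
  simp only [hsub]
  exact (scaled_density_eq m N hN _ fun i => by have := hr i; omega).symm

lemma tendsto_floor_scaled (c : ℝ) :
    Tendsto (fun N : ℕ => (2 * (⌊(c * √N + N) / 2⌋ : ℝ) - N) / √N) atTop (𝓝 c) := by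
  have hfract : Tendsto (fun N : ℕ => 2 * Int.fract ((c * √N + N) / 2) / √N) atTop (𝓝 0) := by
    refine squeeze_zero (fun N => by positivity) (fun N => ?_)
      (by simpa using tendsto_sqrt_natCast_atTop.inv_tendsto_atTop.const_mul 2)
    rw [div_eq_mul_inv]
    gcongr
    linarith [Int.fract_lt_one ((c * √N + N) / 2)]
  have h := hfract.const_sub c
  rw [sub_zero] at h
  refine h.congr' ?_
  filter_upwards [eventually_gt_atTop 0] with N hN
  have hs : √(N : ℝ) ≠ 0 := by positivity
  rw [← Int.self_sub_fract]
  field_simp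
  ring

lemma eventually_floor_lt {c d : ℝ} (h : c < d) :
    ∀ᶠ N : ℕ in atTop, ⌊(c * √N + N) / 2⌋ < ⌊(d * √N + N) / 2⌋ := by
  filter_upwards [(tendsto_floor_scaled c).eventually_lt (tendsto_floor_scaled d) h,
    eventually_gt_atTop 0] with N hlt hN
  rw [div_lt_div_iff_of_pos_right (by positivity)] at hlt
  exact_mod_cast (by linarith : (⌊(c * √N + N) / 2⌋ : ℝ) < ⌊(d * √N + N) / 2⌋)

lemma aztecAlphaY_eventually_eq_zero (n : ℕ) (z : (j : Fin n) → Fin (j.1 + 1) → ℝ)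
    (hinter : ∀ j : Fin n, ∀ h : j.1 + 1 < n, ∀ i : Fin (j.1 + 1),
      z j i < z ⟨j.1 + 1, h⟩ i.castSucc ∧ z ⟨j.1 + 1, h⟩ i.succ < z j i) :
    ∀ᶠ N : ℕ in atTop, aztecAlphaY n z N = 0 := by
  have hne : ∀ᶠ N : ℕ in atTop, ∀ j : Fin n, ∀ h : j.1 + 1 < n, ∀ i : Fin (j.1 + 1),
      ¬(aztecY n z N j i = aztecY n z N ⟨j.1 + 1, h⟩ i.castSucc ∨
        aztecY n z N j i = aztecY n z N ⟨j.1 + 1, h⟩ i.succ) :=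
    eventually_all.mpr fun j => eventually_all.mpr fun h => eventually_all.mpr fun i => by
      filter_upwards [eventually_floor_lt (hinter j h i).1, eventually_floor_lt (hinter j h i).2]
        with N hlt hgt
      simp only [aztecY]
      omega
  filter_upwards [hne] with N hN
  refine sum_eq_zero fun j _ => ?_
  split_ifs with h
  · exact card_eq_zero.mpr (filter_eq_empty_iff.mpr fun i _ => hN j h i)
  · rfl

/-- Fix `n ≥ 1` and strictly interlacing reals `z_i^{(j)}`
(`j = 1,…,n`, `i = 1,…,j`).  With `y_i^{(j)}(N) = ⌊(z_i^{(j)}√N + N)/2⌋` and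
`P_N = [∏_{i=0}^{n-1}(N-i)! / ∏_{i=1}^n y_i^{(n)}!(N-y_i^{(n)})!] ⬝ Δ(y^{(n)}) ⬝
2^{-N-(N-n)(n-1)-α(y^{(1)},…,y^{(n-1)})}`, one has
`(N/4)^{n(n+1)/4} P_N → (2π)^{-n/2} Δ(z^{(n)}) exp(-½∑ᵢ (z_i^{(n)})²)` as
`N → ∞`, the joint density of the GUE* minor process. -/
theorem stmt_7 (n : ℕ) (hn : 1 ≤ n)
    (z : (j : Fin n) → Fin (j.1 + 1) → ℝ)
    (hinter : ∀ j : Fin n, ∀ h : j.1 + 1 < n, ∀ i : Fin (j.1 + 1),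
      z j i < z ⟨j.1 + 1, h⟩ i.castSucc ∧ z ⟨j.1 + 1, h⟩ i.succ < z j i) :
    Filter.Tendsto (fun N : ℕ =>
      ((N : ℝ) / 4) ^ (((n * (n + 1) : ℕ) : ℝ) / 4) *
      ((∏ i ∈ Finset.range n, (Nat.factorial (N - i) : ℝ)) /
        (∏ i : Fin ((n - 1) + 1),
          (((aztecY n z N ⟨n - 1, by omega⟩ i).toNat.factorial *
            ((N : ℤ) - aztecY n z N ⟨n - 1, by omega⟩ i).toNat.factorial : ℕ) : ℝ))) *
      (∏ i : Fin ((n - 1) + 1), ∏ j : Fin ((n - 1) + 1), if i < j then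
          ((aztecY n z N ⟨n - 1, by omega⟩ i : ℝ) -
            (aztecY n z N ⟨n - 1, by omega⟩ j : ℝ)) else 1) *
      ((2 : ℝ) ^ (N + (N - n) * (n - 1) + aztecAlphaY n z N))⁻¹)
      Filter.atTop
      (nhds ((2 * Real.pi) ^ (-(n : ℝ) / 2) *
        (∏ i : Fin ((n - 1) + 1), ∏ j : Fin ((n - 1) + 1), if i < j then
          (z ⟨n - 1, by omega⟩ i - z ⟨n - 1, by omega⟩ j) else 1) *
        Real.exp (-(1 / 2) * ∑ i : Fin ((n - 1) + 1), (z ⟨n - 1, by omega⟩ i) ^ 2))) := by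
  obtain ⟨m, rfl⟩ : ∃ m, n = m + 1 := ⟨n - 1, by omega⟩
  refine (tendsto_scaled_density m (fun N => aztecY (m + 1) z N ⟨m, by omega⟩) (z ⟨m, by omega⟩)
    fun i => tendsto_floor_scaled (z ⟨m, by omega⟩ i)).congr' ?_
  filter_upwards [aztecAlphaY_eventually_eq_zero (m + 1) z hinter] with N hN
  rw [hN, add_zero]
  rfl
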